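/- arXiv:1605.07788 — 3 statements merged into one kernel-verified Lean document; each statement's English description precedes it below -/
import Mathlib

section
/- Let V be an n×n diagonal real matrix with positive diagonal entries v_j, B an n×n real matrix, and λ > v_max·‖B‖ where v_max = max_j v_j and ‖·‖ is the operator norm. Then the matrix λV^{-1} - B is invertible, and the limit as ε → 0⁺ of ε·(I - (I + εB)·E_{ελ})^{-1}, where E_{ελ} = diag(e^{-ελ/v_j}), equals (λI - VB)^{-1}·V. -/
/-! With `E ε = diag (exp (-ε λ / v_j))`, whose derivative at `0` is `-λ V⁻¹`, the matrix
`ε⁻¹ (1 - (1 + ε B) E ε) = ε⁻¹ (1 - E ε) - B E ε` tends to `λ V⁻¹ - B = V⁻¹ (λ - V B)` as `ε → 0`.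
This limit is invertible because `‖V B‖ ≤ v_max ‖B‖ < λ`, so by continuity of matrix inversion
`ε (1 - (1 + ε B) E ε)⁻¹` tends to `(λ V⁻¹ - B)⁻¹ = (λ - V B)⁻¹ V`. -/

open Filter Topology

attribute [local instance] Matrix.linftyOpNormedRing
attribute [local instance] Matrix.linftyOpNormedAlgebra

theorem isUnit_smul_one_sub_of_norm_lt {𝕜 A : Type*} [NormedField 𝕜] [NormedRing A]
    [NormedAlgebra 𝕜 A] [CompleteSpace A] {a : A} {k : 𝕜} (h : ‖a‖ < ‖k‖) :
    IsUnit (k • 1 - a) := by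
  have hk : k ≠ 0 := norm_pos_iff.mp ((norm_nonneg a).trans_lt h)
  refine (IsUnit.smul_sub_iff_sub_inv_smul (Units.mk0 k hk) a).mpr (Units.oneSub _ ?_).isUnit
  rw [Units.smul_def, norm_smul, Units.val_inv_eq_inv_val, Units.val_mk0, norm_inv]
  exact (inv_mul_lt_one₀ (norm_pos_iff.2 hk)).2 h

theorem tendsto_inv_smul_one_sub_one_add_smul_mul {A : Type*} [NormedRing A] [NormedAlgebra ℝ A]
    {E : ℝ → A} {E' : A} (hE : HasDerivAt E E' 0) (hE0 : E 0 = 1) (B : A) :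
    Tendsto (fun t : ℝ => t⁻¹ • (1 - (1 + t • B) * E t)) (𝓝[≠] 0) (𝓝 (-E' - B)) := by
  have hslope : Tendsto (fun t : ℝ => t⁻¹ • (E t - 1)) (𝓝[≠] 0) (𝓝 E') := by
    simpa [hE0] using hE.tendsto_slope_zero
  have hcont : Tendsto E (𝓝[≠] 0) (𝓝 1) :=
    hE0 ▸ hE.continuousAt.tendsto.mono_left nhdsWithin_le_nhds
  have hlim := hslope.neg.sub (hcont.const_mul B)
  rw [mul_one] at hlim
  refine hlim.congr' ?_
  filter_upwards [self_mem_nhdsWithin] with t (ht : t ≠ 0)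
  rw [add_mul, one_mul, smul_mul_assoc, sub_add_eq_sub_sub, smul_sub, smul_sub, smul_sub,
    inv_smul_smul₀ ht]
  abel

namespace Matrix

variable {ι : Type*} [Fintype ι] [DecidableEq ι]

theorem norm_diagonal_le_iSup {v : ι → ℝ} (hv : ∀ j, 0 ≤ v j) : ‖diagonal v‖ ≤ ⨆ j, v j := by
  rw [linfty_opNorm_diagonal]
  refine (pi_norm_le_iff_of_nonneg (Real.iSup_nonneg hv)).2 fun j => ?_
  rw [Real.norm_of_nonneg (hv j)]
  exact le_ciSup (Set.finite_range v).bddAbove j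

theorem hasDerivAt_diagonal {f : ℝ → ι → ℝ} {f' : ι → ℝ} {t : ℝ} (h : HasDerivAt f f' t) :
    HasDerivAt (fun s => diagonal (f s)) (diagonal f') t :=
  (diagonalLinearMap ι ℝ ℝ).toContinuousLinearMap.hasFDerivAt.comp_hasDerivAt t h

theorem hasDerivAt_diagonal_exp_neg_mul_div {v : ι → ℝ} (hv : ∀ j, v j ≠ 0) (lam : ℝ) :
    HasDerivAt (fun ε : ℝ => diagonal fun j => Real.exp (-(ε * lam) / v j))
      (-(lam • (diagonal v)⁻¹)) 0 := by
  have hinv : (diagonal v)⁻¹ = diagonal fun j => (v j)⁻¹ :=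
    inv_eq_left_inv (by simp [diagonal_mul_diagonal, hv])
  rw [hinv, ← diagonal_smul, diagonal_neg]
  refine hasDerivAt_diagonal (hasDerivAt_pi.2 fun j => ?_)
  refine ((hasDerivAt_mul_const lam).neg.div_const (v j)).exp.congr_deriv ?_
  simp [div_eq_mul_inv]

variable {K : Type*} [Field K]

theorem inv_smul_of_ne_zero {k : K} (hk : k ≠ 0) (A : Matrix ι ι K) : (k • A)⁻¹ = k⁻¹ • A⁻¹ := by
  by_cases hA : IsUnit A.det
  · exact inv_smul' A (Units.mk0 k hk) hA
  · have hkA : ¬IsUnit (k • A).det := by simpa [det_smul, hk] using hA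
    rw [nonsing_inv_apply_not_isUnit _ hA, nonsing_inv_apply_not_isUnit _ hkA, smul_zero]

theorem smul_inv_sub_eq_inv_mul {V : Matrix ι ι K} (hV : IsUnit V.det) (k : K) (B : Matrix ι ι K) :
    k • V⁻¹ - B = V⁻¹ * (k • 1 - V * B) := by
  rw [Matrix.mul_sub, Matrix.mul_smul, Matrix.mul_one, ← Matrix.mul_assoc, nonsing_inv_mul _ hV,
    Matrix.one_mul]

theorem isUnit_smul_inv_sub {V : Matrix ι ι K} (hV : IsUnit V.det) {k : K} {B : Matrix ι ι K}
    (h : IsUnit (k • 1 - V * B)) : IsUnit (k • V⁻¹ - B) := by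
  rw [smul_inv_sub_eq_inv_mul hV]
  exact (isUnit_nonsing_inv_iff.2 ((isUnit_iff_isUnit_det V).2 hV)).mul h

theorem inv_smul_one_sub_mul_mul {V : Matrix ι ι K} (hV : IsUnit V.det) (k : K)
    (B : Matrix ι ι K) : (k • 1 - V * B)⁻¹ * V = (k • V⁻¹ - B)⁻¹ := by
  rw [smul_inv_sub_eq_inv_mul hV, mul_inv_rev, nonsing_inv_nonsing_inv _ hV]

end Matrix

theorem Filter.Tendsto.matrix_inv {ι K α : Type*} [Fintype ι] [DecidableEq ι] [Field K]
    [TopologicalSpace K] [IsTopologicalRing K] [ContinuousInv₀ K] {l : Filter α}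
    {f : α → Matrix ι ι K} {A : Matrix ι ι K} (hf : Tendsto f l (𝓝 A)) (hA : IsUnit A.det) :
    Tendsto (fun x => (f x)⁻¹) l (𝓝 A⁻¹) := by
  refine (continuousAt_matrix_inv A ?_).tendsto.comp hf
  rw [Ring.inverse_eq_inv']
  exact continuousAt_inv₀ hA.ne_zero

open Matrix

theorem matrix_resolvent_limit_general (n : ℕ) (v : Fin n → ℝ) (hv : ∀ j, 0 < v j)
    (B : Matrix (Fin n) (Fin n) ℝ) (lam : ℝ)
    (hlam : (⨆ j, v j) * ‖B‖ < lam) :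
    IsUnit (lam • (Matrix.diagonal v)⁻¹ - B) ∧
      Tendsto
        (fun ε : ℝ =>
          ε • (1 - (1 + ε • B) * Matrix.diagonal fun j => Real.exp (-(ε * lam) / v j))⁻¹)
        (nhdsWithin 0 (Set.Ioi 0))
        (nhds ((lam • (1 : Matrix (Fin n) (Fin n) ℝ) - Matrix.diagonal v * B)⁻¹ *
          Matrix.diagonal v)) := by
  have hv0 : ∀ j, v j ≠ 0 := fun j => (hv j).ne'
  have hV : IsUnit (diagonal v).det := by simp [det_diagonal, Finset.prod_ne_zero_iff, hv0]
  have hVB : ‖diagonal v * B‖ < ‖lam‖ := calc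
    ‖diagonal v * B‖ ≤ ‖diagonal v‖ * ‖B‖ := norm_mul_le _ _
    _ ≤ (⨆ j, v j) * ‖B‖ := by gcongr; exact norm_diagonal_le_iSup fun j => (hv j).le
    _ < ‖lam‖ := hlam.trans_le (le_abs_self lam)
  have hA : IsUnit (lam • (diagonal v)⁻¹ - B) :=
    isUnit_smul_inv_sub hV (isUnit_smul_one_sub_of_norm_lt hVB)
  refine ⟨hA, ?_⟩
  rw [inv_smul_one_sub_mul_mul hV]
  have hlim := (tendsto_inv_smul_one_sub_one_add_smul_mul
    (hasDerivAt_diagonal_exp_neg_mul_div hv0 lam) (by simp) B).mono_left (nhdsGT_le_nhdsNE 0)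
  rw [neg_neg] at hlim
  refine (hlim.matrix_inv ((isUnit_iff_isUnit_det _).1 hA)).congr' ?_
  filter_upwards [self_mem_nhdsWithin] with ε (hε : 0 < ε)
  rw [inv_smul_of_ne_zero (inv_ne_zero hε.ne'), inv_inv]

theorem matrix_resolvent_limit (n : ℕ) (hn : 0 < n) (v : Fin n → ℝ) (hv : ∀ j, 0 < v j)
    (B : Matrix (Fin n) (Fin n) ℝ) (lam : ℝ)
    (hlam : (⨆ j, v j) * ‖B‖ < lam) :
    IsUnit (lam • (Matrix.diagonal v)⁻¹ - B) ∧
      Tendsto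
        (fun ε : ℝ =>
          ε • (1 - (1 + ε • B) * Matrix.diagonal fun j => Real.exp (-(ε * lam) / v j))⁻¹)
        (nhdsWithin 0 (Set.Ioi 0))
        (nhds ((lam • (1 : Matrix (Fin n) (Fin n) ℝ) - Matrix.diagonal v * B)⁻¹ *
          Matrix.diagonal v)) :=
  matrix_resolvent_limit_general n v hv B lam hlam
end

section
/- Let b ∈ ℝ and g ∈ L¹([0,1]). Define v_k(x) = (1 + 2b/(2k+1))^{k+1}·g(x + 1/2) for x ∈ [0,1/2) and v_k(x) = (1 + 2b/(2k+1))^k·g(x − 1/2) for x ∈ [1/2,1]. Then v_k converges in L¹([0,1]) to e^b·h, where h(x) = g(x+1/2) on [0,1/2) and h(x) = g(x−1/2) on [1/2,1]. In particular, if g is not a.e. equal to h, the two subsequential limits e^b·g (along ε = 1/k) and e^b·h (along ε = 2/(2k+1)) differ, so the family of transport semigroups does not converge for all initial data. -/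
/-!
Writing `c_k = 1 + 2b/(2k+1)`, we have `k · (c_k - 1) → b`, so both `c_k ^ k` and
`c_k ^ (k+1)` tend to `e^b`. Since `v_k = c_k ^ (k+1) · h` on `[0, 1/2)` and `v_k = c_k ^ k · h`
on `[1/2, 1]`, the error `|v_k - e^b h|` is bounded pointwise by a null sequence times the
integrable function `|h|`.
-/

open Filter Topology MeasureTheory

lemma tendsto_two_mul_div_two_mul_add_one (b : ℝ) :
    Tendsto (fun k : ℕ => 2 * b / (2 * (k : ℝ) + 1)) atTop (𝓝 0) :=
  tendsto_const_nhds.div_atTop <| tendsto_atTop_add_const_right atTop 1 <|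
    tendsto_natCast_atTop_atTop.const_mul_atTop two_pos

lemma tendsto_natCast_mul_two_mul_div_two_mul_add_one (b : ℝ) :
    Tendsto (fun k : ℕ => (k : ℝ) * (2 * b / (2 * (k : ℝ) + 1))) atTop (𝓝 b) := by
  have h := tendsto_const_nhds (x := b) |>.sub
    ((tendsto_two_mul_div_two_mul_add_one b).const_mul (1 / 2))
  rw [mul_zero, sub_zero] at h
  refine h.congr fun k => ?_
  have : (2 * (k : ℝ) + 1) ≠ 0 := by positivity
  field_simp
  ring

lemma tendsto_one_add_two_mul_div_pow (b : ℝ) :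
    Tendsto (fun k : ℕ => (1 + 2 * b / (2 * (k : ℝ) + 1)) ^ k) atTop (𝓝 (Real.exp b)) :=
  Real.tendsto_one_add_pow_exp_of_tendsto (tendsto_natCast_mul_two_mul_div_two_mul_add_one b)

lemma tendsto_one_add_two_mul_div_pow_succ (b : ℝ) :
    Tendsto (fun k : ℕ => (1 + 2 * b / (2 * (k : ℝ) + 1)) ^ (k + 1)) atTop
      (𝓝 (Real.exp b)) := by
  simpa [pow_succ] using (tendsto_one_add_two_mul_div_pow b).mul
    (tendsto_const_nhds (x := (1 : ℝ)) |>.add (tendsto_two_mul_div_two_mul_add_one b))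

lemma MeasureTheory.IntegrableOn.comp_add_right_of_image_subset {g : ℝ → ℝ} {s t : Set ℝ}
    (hg : IntegrableOn g t) (c : ℝ) (hst : (· + c) '' s ⊆ t) :
    IntegrableOn (fun x => g (x + c)) s :=
  ((measurePreserving_add_right volume c).integrableOn_image
    (measurableEmbedding_addRight c)).1 (hg.mono_set hst)

lemma integrableOn_half_shift {g : ℝ → ℝ} (hg : IntegrableOn g (Set.Icc 0 1)) :
    IntegrableOn (fun x => if x < 1 / 2 then g (x + 1 / 2) else g (x - 1 / 2)) (Set.Icc 0 1) := by
  have hleft : IntegrableOn (fun x => g (x + 1 / 2)) (Set.Icc 0 (1 / 2)) := by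
    refine hg.comp_add_right_of_image_subset (1 / 2) ?_
    rw [Set.image_add_const_Icc]; exact Set.Icc_subset_Icc (by norm_num) (by norm_num)
  have hright : IntegrableOn (fun x => g (x + -(1 / 2))) (Set.Icc (1 / 2) 1) := by
    refine hg.comp_add_right_of_image_subset (-(1 / 2)) ?_
    rw [Set.image_add_const_Icc]; exact Set.Icc_subset_Icc (by norm_num) (by norm_num)
  rw [← Set.Ico_union_Icc_eq_Icc (by norm_num : (0 : ℝ) ≤ 1 / 2) (by norm_num)]
  refine .union ((hleft.mono_set Set.Ico_subset_Icc_self).congr_fun ?_ measurableSet_Ico)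
    (hright.congr_fun ?_ measurableSet_Icc)
  · exact fun x hx => by simp only [if_pos hx.2]
  · exact fun x hx => by simp only [if_neg (not_lt.2 hx.1), sub_eq_add_neg]

lemma tendsto_integral_abs_of_abs_le_mul {ι α : Type*} {l : Filter ι} [MeasurableSpace α]
    {μ : Measure α} {F : ι → α → ℝ} {φ : α → ℝ} {D : ι → ℝ} (hφ : Integrable φ μ)
    (hD : Tendsto D l (𝓝 0)) (hF : ∀ i x, |F i x| ≤ D i * |φ x|) :
    Tendsto (fun i => ∫ x, |F i x| ∂μ) l (𝓝 0) := by
  have hupper : ∀ i, ∫ x, |F i x| ∂μ ≤ D i * ∫ x, |φ x| ∂μ := fun i => by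
    rw [← integral_const_mul]
    exact integral_mono_of_nonneg (.of_forall fun x => abs_nonneg _)
      (hφ.abs.const_mul (D i)) (.of_forall (hF i))
  refine tendsto_of_tendsto_of_tendsto_of_le_of_le tendsto_const_nhds ?_
    (fun i => integral_nonneg fun x => abs_nonneg _) hupper
  simpa using hD.mul_const (∫ x, |φ x| ∂μ)

theorem counterexample_subsequence (b : ℝ) (g : ℝ → ℝ)
    (hg : IntegrableOn g (Set.Icc (-(1:ℝ)) 2))
    (h : ℝ → ℝ)
    (hh : h = fun x => if x < 1/2 then g (x + 1/2) else g (x - 1/2))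
    (v : ℕ → ℝ → ℝ)
    (hv : v = fun (k : ℕ) (x : ℝ) =>
      if x < 1/2 then (1 + 2 * b / (2 * (k:ℝ) + 1)) ^ (k + 1) * g (x + 1/2)
      else (1 + 2 * b / (2 * (k:ℝ) + 1)) ^ k * g (x - 1/2)) :
    Tendsto (fun k : ℕ => ∫ x in Set.Icc (0:ℝ) 1, |v k x - Real.exp b * h x|)
      atTop (nhds 0) ∧
    (¬ (∀ᵐ x ∂(volume.restrict (Set.Icc (0:ℝ) 1)), g x = h x) →
      ¬ (∀ᵐ x ∂(volume.restrict (Set.Icc (0:ℝ) 1)),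
        Real.exp b * g x = Real.exp b * h x)) := by
  refine ⟨?_, fun hne hexp => hne ?_⟩
  · set c : ℕ → ℝ := fun k => 1 + 2 * b / (2 * (k : ℝ) + 1)
    have hint : IntegrableOn h (Set.Icc 0 1) := hh ▸ integrableOn_half_shift
      (hg.mono_set (Set.Icc_subset_Icc (by norm_num) (by norm_num)))
    have hbound : ∀ k x, |v k x - Real.exp b * h x| ≤
        max |c k ^ (k + 1) - Real.exp b| |c k ^ k - Real.exp b| * |h x| := by
      intro k x
      subst hh hv
      dsimp only
      split_ifs <;> rw [← sub_mul, abs_mul] <;> gcongr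
      exacts [le_max_left _ _, le_max_right _ _]
    refine tendsto_integral_abs_of_abs_le_mul hint ?_ hbound
    simpa using ((tendsto_one_add_two_mul_div_pow_succ b).sub_const (Real.exp b)).abs.max
      ((tendsto_one_add_two_mul_div_pow b).sub_const (Real.exp b)).abs
  · filter_upwards [hexp] with x hx
    exact mul_left_cancel₀ (Real.exp_ne_zero b) hx
end

section
/- Let v > 0, b ∈ ℝ, and for ε > 0 define the scalar function r(ε, λ) = ε·(1 − (1+εb)e^{-ελ/v})^{-1}·(1+εb)·v^{-1}·∫₀¹ e^{ελ(s−1)/v} f(s) ds for f ∈ L¹([0,1]) and λ > v·|b|. Then lim_{ε→0⁺} r(ε,λ) = (λ − vb)^{-1}·∫₀¹ f(s) ds. -/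
/-!
The prefactor `ε / (1 - (1 + ε b) e^{-ε λ / v})` is the reciprocal of a difference quotient at
`0` of a function vanishing there, so it tends to the inverse of its derivative `λ / v - b`,
which is nonzero because `λ > v |b|`. The integral tends to `∫₀¹ f` by dominated convergence:
on a compact neighbourhood of `ε = 0` the continuous kernel is bounded, so `C |f|` dominates.
-/

open Filter Topology MeasureTheory

theorem continuousAt_intervalIntegral_mul_of_continuous {k : ℝ → ℝ → ℝ}
    (hk : Continuous (Function.uncurry k)) {f : ℝ → ℝ} {a b : ℝ}
    (hf : IntervalIntegrable f volume a b) (ε₀ : ℝ) :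
    ContinuousAt (fun ε => ∫ x in a..b, k ε x * f x) ε₀ := by
  obtain ⟨C, hC⟩ := ((isCompact_closedBall ε₀ 1).prod isCompact_uIcc).exists_bound_of_continuousOn
    hk.continuousOn
  have hk_slice (ε : ℝ) : Continuous (k ε) := hk.comp (continuous_const.prodMk continuous_id)
  refine intervalIntegral.continuousAt_of_dominated_interval (bound := fun x => C * ‖f x‖) ?_ ?_
    (hf.norm.const_mul C) ?_
  · exact .of_forall fun ε =>
      (hk_slice ε).aestronglyMeasurable.mul hf.def'.aestronglyMeasurable
  · filter_upwards [Metric.closedBall_mem_nhds ε₀ one_pos] with ε hε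
    refine .of_forall fun x hx => ?_
    rw [norm_mul]
    exact mul_le_mul_of_nonneg_right (hC (ε, x) ⟨hε, Set.uIoc_subset_uIcc hx⟩) (norm_nonneg _)
  · refine .of_forall fun x _ => ?_
    exact ((hk.comp (continuous_id.prodMk continuous_const)).mul continuous_const).continuousAt

theorem HasDerivAt.tendsto_self_mul_inv_nhdsNE {h : ℝ → ℝ} {d : ℝ} (hh : HasDerivAt h d 0)
    (h0 : h 0 = 0) (hd : d ≠ 0) :
    Tendsto (fun ε => ε * (h ε)⁻¹) (𝓝[≠] 0) (𝓝 d⁻¹) := by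
  have := (hh.tendsto_slope_zero).inv₀ hd
  simpa [h0, mul_comm] using this

theorem hasDerivAt_one_sub_mul_exp (b c : ℝ) :
    HasDerivAt (fun ε => 1 - (1 + ε * b) * Real.exp (-(ε * c))) (c - b) 0 := by
  have hlin : HasDerivAt (fun ε : ℝ => 1 + ε * b) b 0 := by
    simpa using ((hasDerivAt_id (0 : ℝ)).mul_const b).const_add 1
  have hexp : HasDerivAt (fun ε : ℝ => Real.exp (-(ε * c))) (-c) 0 := by
    simpa using (((hasDerivAt_id (0 : ℝ)).mul_const c).neg).exp
  exact ((hlin.mul hexp).const_sub 1).congr_deriv (by simp [sub_eq_add_neg])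

theorem boundary_constant_limit (v b : ℝ) (hv : 0 < v) (lam : ℝ) (hlam : v * |b| < lam)
    (f : ℝ → ℝ) (hf : IntegrableOn f (Set.Icc 0 1)) :
    Tendsto
      (fun ε : ℝ =>
        ε * (1 - (1 + ε * b) * Real.exp (-(ε * lam) / v))⁻¹ * (1 + ε * b) * v⁻¹ *
          ∫ s in (0:ℝ)..1, Real.exp (ε * lam * (s - 1) / v) * f s)
      (nhdsWithin 0 (Set.Ioi 0))
      (nhds ((lam - v * b)⁻¹ * ∫ s in (0:ℝ)..1, f s)) := by
  have hvb : v * b < lam := (mul_le_mul_of_nonneg_left (le_abs_self b) hv.le).trans_lt hlam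
  have hd : lam / v - b ≠ 0 := by
    rw [sub_ne_zero, ne_eq, div_eq_iff hv.ne']
    linarith
  have hden : Tendsto (fun ε => ε * (1 - (1 + ε * b) * Real.exp (-(ε * lam) / v))⁻¹)
      (𝓝[>] 0) (𝓝 (lam / v - b)⁻¹) := by
    simpa only [neg_div, mul_div_assoc] using
      ((hasDerivAt_one_sub_mul_exp b (lam / v)).tendsto_self_mul_inv_nhdsNE (by simp)
        hd).mono_left (nhdsGT_le_nhdsNE 0)
  have hlin : Tendsto (fun ε : ℝ => 1 + ε * b) (𝓝[>] 0) (𝓝 1) :=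
    ((by fun_prop : Continuous fun ε : ℝ => 1 + ε * b).tendsto' 0 1 (by simp)).mono_left
      nhdsWithin_le_nhds
  have hint : Tendsto (fun ε => ∫ s in (0:ℝ)..1, Real.exp (ε * lam * (s - 1) / v) * f s)
      (𝓝[>] 0) (𝓝 (∫ s in (0:ℝ)..1, f s)) := by
    have hcont := continuousAt_intervalIntegral_mul_of_continuous
      (k := fun ε s => Real.exp (ε * lam * (s - 1) / v)) (by fun_prop)
      ((intervalIntegrable_iff_integrableOn_Icc_of_le zero_le_one).2 hf) 0
    simpa using hcont.tendsto.mono_left nhdsWithin_le_nhds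
  convert ((hden.mul hlin).mul_const v⁻¹).mul hint using 2
  field_simp
end
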